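/- arXiv:0904.2316 — 5 statements merged into one kernel-verified Lean document; each statement's English description precedes it below -/
import Mathlib

section
/- For the truncated divisor function d_N and any prime p dividing n, one has d_N(n) ≤ 2 · d_N(n/p). -/
open Finset

theorem filter_dvd_prime_mul_subset (N : ℕ) {p : ℕ} (hp : p.Prime) (m : ℕ) :
    (Icc 1 N).filter (· ∣ p * m) ⊆
      (Icc 1 N).filter (· ∣ m) ∪ ((Icc 1 N).filter (· ∣ m)).image (p * ·) := by
  intro k hk
  obtain ⟨hkI, hkd⟩ := mem_filter.mp hk
  obtain ⟨d₁, d₂, hd₁, hd₂, rfl⟩ := dvd_mul.mp hkd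
  rcases (Nat.dvd_prime hp).mp hd₁ with rfl | rfl
  · rw [one_mul] at hkI ⊢
    exact mem_union_left _ (mem_filter.mpr ⟨hkI, hd₂⟩)
  · refine mem_union_right _ (mem_image.mpr ⟨d₂, mem_filter.mpr ⟨?_, hd₂⟩, rfl⟩)
    obtain ⟨hk1, hkN⟩ := mem_Icc.mp hkI
    exact mem_Icc.mpr ⟨Nat.pos_of_mul_pos_left hk1, (Nat.le_mul_of_pos_left d₂ hp.pos).trans hkN⟩

theorem card_filter_dvd_prime_mul_le (N : ℕ) {p : ℕ} (hp : p.Prime) (m : ℕ) :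
    ((Icc 1 N).filter (· ∣ p * m)).card ≤ 2 * ((Icc 1 N).filter (· ∣ m)).card :=
  calc ((Icc 1 N).filter (· ∣ p * m)).card
      ≤ ((Icc 1 N).filter (· ∣ m)).card + (((Icc 1 N).filter (· ∣ m)).image (p * ·)).card :=
        (card_le_card (filter_dvd_prime_mul_subset N hp m)).trans (card_union_le _ _)
    _ ≤ 2 * ((Icc 1 N).filter (· ∣ m)).card := by
        rw [two_mul]
        exact Nat.add_le_add_left card_image_le _

theorem truncatedDivisor_div_prime_general (N : ℕ) (p n : ℕ) (hp : p.Prime)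
    (hpn : p ∣ n) :
    ((Finset.Icc 1 N).filter (fun k => k ∣ n)).card ≤
      2 * ((Finset.Icc 1 N).filter (fun k => k ∣ n / p)).card := by
  obtain ⟨m, rfl⟩ := hpn
  rw [Nat.mul_div_cancel_left m hp.pos]
  exact card_filter_dvd_prime_mul_le N hp m

/-- For the truncated divisor function `d_N(n) = #{k ≤ N : k ∣ n}` and any prime `p`
dividing `n`, one has `d_N(n) ≤ 2 · d_N(n/p)`. -/
theorem truncatedDivisor_div_prime (N : ℕ) (hN : 0 < N) (p n : ℕ) (hp : p.Prime)
    (hn : 0 < n) (hpn : p ∣ n) :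
    ((Finset.Icc 1 N).filter (fun k => k ∣ n)).card ≤
      2 * ((Finset.Icc 1 N).filter (fun k => k ∣ n / p)).card :=
  truncatedDivisor_div_prime_general N p n hp hpn
end

section
/- Let 0 < σ < 1/2, d : ℕ → ℝ≥0, D₁(M) = Σ_{m≤M} d(m) and D̃₁(M) = max_{1≤m≤M} D₁(m)/m. There is a constant C depending only on σ such that for integers 1 ≤ M ≤ N/2, Σ_{m≤M} (N/m)^{1/2} (log(N/m))^{-1/2} d(m) ≤ C · D̃₁(M) · (NM)^{1/2} (log(N/M))^{-1/2}. -/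
open Finset Real

/-- Abel summation inequality. -/
lemma abel_aux (d f : ℕ → ℝ) (D : ℝ) (hD : 0 ≤ D) (hfnn : ∀ m, 0 ≤ f m) :
    ∀ M : ℕ, (∀ m, 1 ≤ m → m ≤ M → ∑ k ∈ Icc 1 m, d k ≤ D * m) →
    (∀ m, 1 ≤ m → m < M → f (m + 1) ≤ f m) →
    ∑ m ∈ Icc 1 M, d m * f m ≤
      (∑ k ∈ Icc 1 M, d k) * f M + D * ((∑ m ∈ Ico 1 M, f m) - ((M : ℝ) - 1) * f M) := by
  intro M
  induction M with
  | zero => intro _ _; simpa using mul_nonneg hD (hfnn 0)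
  | succ M ih =>
    rcases Nat.eq_zero_or_pos M with h0 | hMpos
    · subst h0; intro _ _; simp
    · intro hA hf
      have hAM : ∑ k ∈ Icc 1 M, d k ≤ D * M := hA M hMpos (Nat.le_succ M)
      have hfM : f (M + 1) ≤ f M := hf M hMpos (Nat.lt_succ_self M)
      have ihh := ih (fun m h1 h2 => hA m h1 (h2.trans (Nat.le_succ M)))
        (fun m h1 h2 => hf m h1 (h2.trans (Nat.lt_succ_self M)))
      rw [Finset.sum_Icc_succ_top (by omega : 1 ≤ M + 1),
        Finset.sum_Icc_succ_top (by omega : 1 ≤ M + 1),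
        Finset.sum_Ico_succ_top hMpos]
      push_cast
      nlinarith [mul_nonneg (sub_nonneg.2 hAM) (sub_nonneg.2 hfM)]

lemma abel_cor (d f : ℕ → ℝ) (D : ℝ) (hD : 0 ≤ D) (hfnn : ∀ m, 0 ≤ f m) (M : ℕ) (hM : 1 ≤ M)
    (hA : ∀ m, 1 ≤ m → m ≤ M → ∑ k ∈ Icc 1 m, d k ≤ D * m)
    (hf : ∀ m, 1 ≤ m → m < M → f (m + 1) ≤ f m) :
    ∑ m ∈ Icc 1 M, d m * f m ≤ D * ∑ m ∈ Icc 1 M, f m := by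
  have h := abel_aux d f D hD hfnn M hA hf
  have h2 : (∑ k ∈ Icc 1 M, d k) * f M ≤ D * M * f M :=
    mul_le_mul_of_nonneg_right (hA M hM le_rfl) (hfnn M)
  have h3 : ∑ m ∈ Icc 1 M, f m = (∑ m ∈ Ico 1 M, f m) + f M := by
    rw [← Finset.Ico_add_one_right_eq_Icc, Finset.sum_Ico_succ_top hM]
  calc ∑ m ∈ Icc 1 M, d m * f m ≤
      (∑ k ∈ Icc 1 M, d k) * f M + D * ((∑ m ∈ Ico 1 M, f m) - ((M : ℝ) - 1) * f M) := h
    _ ≤ D * M * f M + D * ((∑ m ∈ Ico 1 M, f m) - ((M : ℝ) - 1) * f M) := by linarith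
    _ = D * ((∑ m ∈ Ico 1 M, f m) + f M) := by ring
    _ = D * ∑ m ∈ Icc 1 M, f m := by rw [h3]

lemma sum_inv_sqrt : ∀ M : ℕ, ∑ m ∈ Icc 1 M, (Real.sqrt m)⁻¹ ≤ 2 * Real.sqrt M := by
  intro M
  induction M with
  | zero => simp
  | succ M ih =>
    rw [Finset.sum_Icc_succ_top (by omega : 1 ≤ M + 1)]
    have b1 : 0 < Real.sqrt ((M : ℝ) + 1) := Real.sqrt_pos.2 (by positivity)
    have sa : Real.sqrt (M : ℝ) ^ 2 = (M : ℝ) := Real.sq_sqrt (by positivity)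
    have sb : Real.sqrt ((M : ℝ) + 1) ^ 2 = (M : ℝ) + 1 := Real.sq_sqrt (by positivity)
    have key : (Real.sqrt ((M : ℝ) + 1))⁻¹ ≤
        2 * (Real.sqrt ((M : ℝ) + 1) - Real.sqrt (M : ℝ)) := by
      rw [inv_eq_one_div, div_le_iff₀ b1]
      nlinarith [sq_nonneg (Real.sqrt ((M : ℝ) + 1) - Real.sqrt (M : ℝ))]
    push_cast
    push_cast at key
    linarith

/-- For `0 < σ < 1/2` there is `C > 0` such that for integers `1 ≤ M ≤ N/2`,
`Σ_{m≤M} (N/m)^{1/2} (log(N/m))^{-1/2} d(m) ≤ C · D̃₁(M) · (NM)^{1/2} (log(N/M))^{-1/2}`,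
where `D̃₁(M) = max_{1≤m≤M} (Σ_{k≤m} d(k))/m`. -/
theorem abel_bound_D1 (σ : ℝ) (hσ0 : 0 < σ) (hσ : σ < 1 / 2) :
    ∃ C : ℝ, 0 < C ∧ ∀ (d : ℕ → ℝ), (∀ n, 0 ≤ d n) → ∀ M N : ℕ, ∀ hM : 1 ≤ M,
      2 * M ≤ N →
      ∑ m ∈ Icc 1 M, Real.sqrt ((N : ℝ) / m) * (Real.log ((N : ℝ) / m))⁻¹ ^ (1/2 : ℝ) * d m ≤
        C * ((Icc 1 M).sup' (Finset.nonempty_Icc.2 hM)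
              (fun m => (∑ k ∈ Icc 1 m, d k) / (m : ℝ)))
          * Real.sqrt ((N : ℝ) * M) * (Real.log ((N : ℝ) / M))⁻¹ ^ (1/2 : ℝ) := by
  refine ⟨2, by norm_num, ?_⟩
  intro d hd M N hM hMN
  set D : ℝ := (Icc 1 M).sup' (Finset.nonempty_Icc.2 hM)
      (fun m => (∑ k ∈ Icc 1 m, d k) / (m : ℝ)) with hDdef
  set L : ℝ := (Real.log ((N : ℝ) / M))⁻¹ ^ (1/2 : ℝ) with hLdef
  have hMpos : (0 : ℝ) < M := by exact_mod_cast hM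
  have hNpos : (0 : ℝ) < N := by
    have : 2 ≤ N := by omega
    exact_mod_cast Nat.lt_of_lt_of_le (by norm_num) this
  have hD0 : 0 ≤ D := by
    have h1 : (0 : ℝ) ≤ (∑ k ∈ Icc 1 1, d k) / ((1 : ℕ) : ℝ) := by
      apply div_nonneg (Finset.sum_nonneg fun k _ => hd k) (by norm_num)
    have h2 := Finset.le_sup' (f := fun m => (∑ k ∈ Icc 1 m, d k) / (m : ℝ))
      (Finset.mem_Icc.2 ⟨le_rfl, hM⟩)
    rw [← hDdef] at h2
    exact h1.trans h2
  have hA : ∀ m, 1 ≤ m → m ≤ M → ∑ k ∈ Icc 1 m, d k ≤ D * m := by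
    intro m h1 h2
    have hmpos : (0 : ℝ) < m := by exact_mod_cast h1
    have hle := Finset.le_sup' (f := fun m => (∑ k ∈ Icc 1 m, d k) / (m : ℝ))
      (Finset.mem_Icc.2 ⟨h1, h2⟩)
    rw [← hDdef] at hle
    calc ∑ k ∈ Icc 1 m, d k = ((∑ k ∈ Icc 1 m, d k) / (m : ℝ)) * m := by
          field_simp
      _ ≤ D * m := mul_le_mul_of_nonneg_right hle hmpos.le
  have hlogM : 0 < Real.log ((N : ℝ) / M) := by
    apply Real.log_pos
    rw [lt_div_iff₀ hMpos]
    have : M < N := by omega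
    calc (1 : ℝ) * M = (M : ℝ) := by ring
      _ < N := by exact_mod_cast this
  have hL0 : 0 ≤ L := Real.rpow_nonneg (by positivity) _
  -- termwise bound
  have key : ∀ m ∈ Icc 1 M,
      Real.sqrt ((N : ℝ) / m) * (Real.log ((N : ℝ) / m))⁻¹ ^ (1/2 : ℝ) * d m ≤
        Real.sqrt N * L * (d m * (Real.sqrt m)⁻¹) := by
    intro m hm
    rw [Finset.mem_Icc] at hm
    have hmpos : (0 : ℝ) < m := by exact_mod_cast hm.1
    have hdiv : (N : ℝ) / M ≤ (N : ℝ) / m := by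
      apply div_le_div_of_nonneg_left hNpos.le hmpos
      exact_mod_cast hm.2
    have hlogm : 0 < Real.log ((N : ℝ) / m) :=
      hlogM.trans_le (Real.log_le_log (by positivity) hdiv)
    have hinv : (Real.log ((N : ℝ) / m))⁻¹ ≤ (Real.log ((N : ℝ) / M))⁻¹ :=
      inv_anti₀ hlogM (Real.log_le_log (by positivity) hdiv)
    have hr : (Real.log ((N : ℝ) / m))⁻¹ ^ (1/2 : ℝ) ≤ L :=
      Real.rpow_le_rpow (by positivity) hinv (by norm_num)
    have hs : Real.sqrt ((N : ℝ) / m) = Real.sqrt N / Real.sqrt m :=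
      Real.sqrt_div (by positivity) _
    rw [hs]
    have h1 : Real.sqrt N / Real.sqrt m * (Real.log ((N : ℝ) / m))⁻¹ ^ (1/2 : ℝ) * d m ≤
        Real.sqrt N / Real.sqrt m * L * d m :=
      mul_le_mul_of_nonneg_right (mul_le_mul_of_nonneg_left hr (by positivity)) (hd m)
    calc Real.sqrt N / Real.sqrt m * (Real.log ((N : ℝ) / m))⁻¹ ^ (1/2 : ℝ) * d m ≤
        Real.sqrt N / Real.sqrt m * L * d m := h1
      _ = Real.sqrt N * L * (d m * (Real.sqrt m)⁻¹) := by
          rw [div_eq_mul_inv]; ring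
  have hsum1 : ∑ m ∈ Icc 1 M,
      Real.sqrt ((N : ℝ) / m) * (Real.log ((N : ℝ) / m))⁻¹ ^ (1/2 : ℝ) * d m ≤
      Real.sqrt N * L * ∑ m ∈ Icc 1 M, d m * (Real.sqrt m)⁻¹ := by
    rw [Finset.mul_sum]
    exact Finset.sum_le_sum key
  have hf : ∀ m, 1 ≤ m → m < M → (Real.sqrt ((m : ℕ) + 1 : ℕ))⁻¹ ≤ (Real.sqrt (m : ℕ))⁻¹ := by
    intro m h1 _
    have h2 : (0 : ℝ) < Real.sqrt m := Real.sqrt_pos.2 (by exact_mod_cast h1)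
    apply inv_anti₀ h2
    apply Real.sqrt_le_sqrt
    push_cast; linarith
  have habel : ∑ m ∈ Icc 1 M, d m * (Real.sqrt m)⁻¹ ≤ D * ∑ m ∈ Icc 1 M, (Real.sqrt m)⁻¹ :=
    abel_cor d (fun m => (Real.sqrt m)⁻¹) D hD0 (fun m => by positivity) M hM hA hf
  have hsum2 : ∑ m ∈ Icc 1 M, d m * (Real.sqrt m)⁻¹ ≤ D * (2 * Real.sqrt M) :=
    habel.trans (mul_le_mul_of_nonneg_left (sum_inv_sqrt M) hD0)
  have hfinal : Real.sqrt N * L * ∑ m ∈ Icc 1 M, d m * (Real.sqrt m)⁻¹ ≤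
      Real.sqrt N * L * (D * (2 * Real.sqrt M)) :=
    mul_le_mul_of_nonneg_left hsum2 (by positivity)
  have hNM : Real.sqrt ((N : ℝ) * M) = Real.sqrt N * Real.sqrt M :=
    Real.sqrt_mul (by positivity) _
  calc ∑ m ∈ Icc 1 M, Real.sqrt ((N : ℝ) / m) * (Real.log ((N : ℝ) / m))⁻¹ ^ (1/2 : ℝ) * d m ≤
      Real.sqrt N * L * (D * (2 * Real.sqrt M)) := hsum1.trans hfinal
    _ = 2 * D * Real.sqrt ((N : ℝ) * M) * L := by rw [hNM]; ring
end

section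
/- Let 0 ≤ β < 1. There exist constants C_β, y_β, c_β > 0 such that for all reals x, y with y ≥ y_β and y ≤ c_β x, Σ_{n ≤ x, P⁺(n) ≤ y} n^{-β} ≤ C_β x^{1-β} e^{-(1/2)(log x / log y)}, where P⁺(n) denotes the largest prime factor of n. -/
/-!
Write `Ψ(N, y)` for the number of `n ≤ N` with `P⁺(n) ≤ y`. For `0 ≤ δ ≤ 1 / (2 log y)` one has
`Ψ(N, y) ≤ e⁸ N^(1-δ)`, by strong induction on `N`. If `log N ≤ 16 log y` the trivial bound
`Ψ ≤ N` suffices. Otherwise split `Ψ(N, y) log N = ∑ log (N / n) + ∑ log n` over the smooth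
`n ≤ N`: partial summation against the inductive bound controls the first sum, and writing
`log n = ∑ₚ vₚ(n) log p` and counting the multiples of `p^ν` by `Ψ(N / p^ν, y)` bounds the second
by `N^(1-δ) ∑_{p ≤ y} log p / p`, which is `O(N^(1-δ) log y)` by Legendre's formula and Chebyshev's
bound. Partial summation then turns the bound on `Ψ` with `δ = 1 / (2 log y)` into the bound on
`∑ n^(-β)`, since `x^(-δ) = e^(-(1/2) log x / log y)`.
-/

open Finset

/-- The largest prime factor of `n` (`0` if `n ≤ 1`). -/
def maxPrimeFac (n : ℕ) : ℕ := n.primeFactors.sup id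

open Real

lemma rpow_neg_sub_rpow_neg_add_one_le {β a : ℝ} (hβ : β ≤ 1) (ha : 0 < a) :
    a ^ (-β) - (a + 1) ^ (-β) ≤ a ^ (-β - 1) := by
  have ha1 : 0 < a + 1 := by linarith
  have hgrow : a ^ (1 - β) ≤ (a + 1) ^ (1 - β) := by gcongr; linarith
  have hmul {t : ℝ} (ht : 0 < t) : t ^ (1 - β) = t ^ (-β) * t := by
    rw [← rpow_add_one ht.ne']; ring_nf
  rw [hmul ha, hmul ha1] at hgrow
  rw [rpow_sub_one ha.ne', le_div_iff₀ ha]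
  nlinarith [rpow_pos_of_pos ha (-β)]

lemma mul_rpow_neg_le_rpow_add_one_sub_rpow {s a : ℝ} (hs0 : 0 ≤ s) (hs1 : s ≤ 1) (ha : 0 ≤ a) :
    (1 - s) * (a + 1) ^ (-s) ≤ (a + 1) ^ (1 - s) - a ^ (1 - s) := by
  have ha1 : 0 < a + 1 := by linarith
  have hbernoulli := rpow_one_add_le_one_add_mul_self (s := -1 / (a + 1))
    (by rw [neg_div, neg_le_neg_iff, div_le_one ha1]; linarith) (p := 1 - s)
    (by linarith) (by linarith)
  have hbase : 1 + -1 / (a + 1) = a / (a + 1) := by field_simp; ring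
  rw [hbase, div_rpow ha ha1.le, div_le_iff₀ (by positivity)] at hbernoulli
  have hsplit : (a + 1) ^ (1 - s) = (a + 1) ^ (-s) * (a + 1) := by
    rw [← rpow_add_one ha1.ne']; ring_nf
  rw [hsplit] at hbernoulli ⊢
  field_simp at hbernoulli
  nlinarith

lemma sum_Icc_rpow_neg_le {s : ℝ} (hs0 : 0 ≤ s) (hs1 : s < 1) (N : ℕ) :
    ∑ m ∈ Icc 1 N, (m : ℝ) ^ (-s) ≤ (N : ℝ) ^ (1 - s) / (1 - s) := by
  induction N with
  | zero => simp [zero_rpow (by linarith : (1 : ℝ) - s ≠ 0)]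
  | succ N ih =>
    rw [sum_Icc_succ_top (by omega), le_div_iff₀ (by linarith), add_mul]
    have := mul_rpow_neg_le_rpow_add_one_sub_rpow hs0 hs1.le (Nat.cast_nonneg N)
    rw [le_div_iff₀ (by linarith)] at ih
    push_cast
    linarith

lemma log_add_one_sub_log_le {a : ℝ} (ha : 0 < a) : log (a + 1) - log a ≤ a⁻¹ := by
  rw [← log_div (by positivity) ha.ne']
  exact (log_le_sub_one_of_pos (by positivity)).trans_eq (by field_simp; ring)

lemma sum_geom_rpow_le {p : ℕ} (hp : 2 ≤ p) {δ : ℝ} (hpδ : δ * log p ≤ 1 / 2) (M : ℕ) :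
    ∑ i ∈ Icc 1 M, ((p : ℝ) ^ (δ - 1)) ^ i ≤ 14 / p := by
  have hp0 : (0 : ℝ) < p := by positivity
  have hp2 : (2 : ℝ) ≤ p := by exact_mod_cast hp
  have hexp : exp (1 / 2) ≤ 7 / 4 := by
    have hsq : exp (1 / 2) ^ 2 = exp 1 := by rw [← exp_nat_mul]; norm_num
    nlinarith [exp_one_lt_d9, exp_pos (1 / 2)]
  have hpδ' : (p : ℝ) ^ δ ≤ 7 / 4 := by
    rw [rpow_def_of_pos hp0]
    exact (exp_le_exp.2 (by linarith)).trans hexp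
  have hr : (p : ℝ) ^ (δ - 1) * p = (p : ℝ) ^ δ := by
    rw [rpow_sub_one hp0.ne', div_mul_cancel₀ _ hp0.ne']
  set r := (p : ℝ) ^ (δ - 1)
  have hr0 : 0 ≤ r := by positivity
  have hr1 : r ≤ 7 / 8 := by nlinarith
  calc ∑ i ∈ Icc 1 M, r ^ i = ∑ i ∈ Ico 1 (M + 1), r ^ i := by rw [Ico_add_one_right_eq_Icc]
    _ ≤ r ^ 1 / (1 - r) := geom_sum_Ico_le_of_lt_one hr0 (by linarith)
    _ ≤ 14 / p := by
        rw [pow_one, div_le_div_iff₀ (by linarith) hp0]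
        nlinarith

theorem sum_eq_card_mul_add_sum_card_filter_le_mul {S : Finset ℕ} {N : ℕ} (hS : S ⊆ Icc 1 N)
    (f : ℕ → ℝ) :
    ∑ n ∈ S, f n = #S * f N + ∑ m ∈ Ico 1 N, (#{n ∈ S | n ≤ m} : ℝ) * (f m - f (m + 1)) := by
  have htelescope : ∀ n ∈ S, f n = f N + ∑ m ∈ Ico n N, (f m - f (m + 1)) := by
    intro n hn
    have := sum_Ico_sub f (mem_Icc.1 (hS hn)).2
    rw [sum_sub_distrib] at this ⊢
    linarith
  rw [sum_congr rfl htelescope, sum_add_distrib, sum_const, nsmul_eq_mul,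
    sum_comm' (t' := Ico 1 N) (s' := fun m => {n ∈ S | n ≤ m})]
  · simp only [sum_const, nsmul_eq_mul]
  · intro n m
    simp only [mem_Ico, mem_filter]
    constructor
    · rintro ⟨hn, hnm, hmN⟩
      exact ⟨⟨hn, hnm⟩, (mem_Icc.1 (hS hn)).1.trans hnm, hmN⟩
    · rintro ⟨⟨hn, hnm⟩, -, hmN⟩
      exact ⟨hn, hnm, hmN⟩

theorem sum_le_card_mul_add_sum_mul_sub {S : Finset ℕ} {N : ℕ} (hS : S ⊆ Icc 1 N)
    {f g : ℕ → ℝ} (hf : ∀ m ∈ Ico 1 N, f (m + 1) ≤ f m)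
    (hg : ∀ m ∈ Ico 1 N, (#{n ∈ S | n ≤ m} : ℝ) ≤ g m) :
    ∑ n ∈ S, f n ≤ #S * f N + ∑ m ∈ Ico 1 N, g m * (f m - f (m + 1)) := by
  rw [sum_eq_card_mul_add_sum_card_filter_le_mul hS]
  gcongr with m hm
  · linarith [hf m hm]
  · exact hg m hm

theorem sum_rpow_neg_le_of_card_filter_le {S : Finset ℕ} {N : ℕ} (hS : S ⊆ Icc 1 N)
    {β σ K : ℝ} (hβ0 : 0 ≤ β) (hβσ : β < σ) (hσ1 : σ ≤ 1)
    (hK : ∀ m ∈ Icc 1 N, (#{n ∈ S | n ≤ m} : ℝ) ≤ K * m ^ σ) :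
    ∑ n ∈ S, (n : ℝ) ^ (-β) ≤ K * (1 + 1 / (σ - β)) * N ^ (σ - β) := by
  rcases N.eq_zero_or_pos with rfl | hN
  · simp [subset_empty.1 hS, zero_rpow (sub_pos.2 hβσ).ne']
  have hcard : (#S : ℝ) ≤ K * N ^ σ := by
    simpa [filter_true_of_mem fun n hn => (mem_Icc.1 (hS hn)).2]
      using hK N (mem_Icc.2 ⟨hN, le_rfl⟩)
  have hK0 : 0 ≤ K :=
    nonneg_of_mul_nonneg_left ((Nat.cast_nonneg _).trans hcard)
      (rpow_pos_of_pos (by exact_mod_cast hN) σ)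
  have hmul {m : ℕ} (hm : 0 < m) (a b : ℝ) : (m : ℝ) ^ a * (m : ℝ) ^ b = (m : ℝ) ^ (a + b) :=
    (rpow_add (by exact_mod_cast hm) a b).symm
  calc ∑ n ∈ S, (n : ℝ) ^ (-β)
      ≤ #S * (N : ℝ) ^ (-β) + ∑ m ∈ Ico 1 N,
          K * (m : ℝ) ^ σ * ((m : ℝ) ^ (-β) - ((m + 1 : ℕ) : ℝ) ^ (-β)) := by
        refine sum_le_card_mul_add_sum_mul_sub hS (fun m hm => ?_)
          (fun m hm => hK m (Ico_subset_Icc_self hm))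
        exact rpow_le_rpow_of_nonpos (by exact_mod_cast (mem_Ico.1 hm).1) (by simp) (by linarith)
    _ ≤ K * N ^ σ * (N : ℝ) ^ (-β) + ∑ m ∈ Icc 1 N, K * (m : ℝ) ^ (-(1 - σ + β)) := by
        refine add_le_add (mul_le_mul_of_nonneg_right hcard (by positivity)) ?_
        refine (sum_le_sum fun m hm => ?_).trans
          (sum_le_sum_of_subset_of_nonneg Ico_subset_Icc_self fun _ _ _ => by positivity)
        have hm : 0 < m := (mem_Ico.1 hm).1
        calc K * (m : ℝ) ^ σ * ((m : ℝ) ^ (-β) - ((m + 1 : ℕ) : ℝ) ^ (-β))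
            ≤ K * (m : ℝ) ^ σ * (m : ℝ) ^ (-β - 1) := by
              push_cast
              gcongr
              exact rpow_neg_sub_rpow_neg_add_one_le (by linarith) (by exact_mod_cast hm)
          _ = K * (m : ℝ) ^ (-(1 - σ + β)) := by rw [mul_assoc, hmul hm]; ring_nf
    _ ≤ K * N ^ (σ - β) + K * (N ^ (σ - β) / (σ - β)) := by
        have hsum := sum_Icc_rpow_neg_le (s := 1 - σ + β) (by linarith) (by linarith) N
        rw [show 1 - (1 - σ + β) = σ - β by ring] at hsum
        rw [← mul_sum, mul_assoc, hmul hN, show σ + -β = σ - β by ring]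
        gcongr
    _ = K * (1 + 1 / (σ - β)) * N ^ (σ - β) := by ring

lemma log_nat_eq_sum_of_primeFactors_subset {n : ℕ} {s : Finset ℕ} (h : n.primeFactors ⊆ s) :
    log n = ∑ p ∈ s, n.factorization p * log p := by
  rw [log_nat_eq_sum_factorization,
    Finsupp.sum_of_support_subset _ (s := s) (by rwa [Nat.support_factorization]) _ (by simp)]

lemma div_le_factorization_factorial {p : ℕ} (hp : p.Prime) (n : ℕ) :
    n / p ≤ n.factorial.factorization p := by
  calc n / p ≤ (p * (n / p)).factorial.factorization p := by
        rw [Nat.factorization_factorial_mul hp]; omega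
    _ ≤ n.factorial.factorization p :=
      (Nat.factorization_le_iff_dvd (Nat.factorial_ne_zero _) (Nat.factorial_ne_zero _)).2
        (Nat.factorial_dvd_factorial (Nat.mul_div_le n p)) p

lemma sum_primesLE_log_div_le (n : ℕ) : ∑ p ∈ Nat.primesLE n, log p / p ≤ log n + log 4 := by
  rcases n.eq_zero_or_pos with rfl | hn
  · simp [Nat.primesLE, log_nonneg]
  have hlegendre : ∑ p ∈ Nat.primesLE n, ((n / p : ℕ) : ℝ) * log p ≤ n * log n :=
    calc ∑ p ∈ Nat.primesLE n, ((n / p : ℕ) : ℝ) * log p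
        ≤ ∑ p ∈ Nat.primesLE n, (n.factorial.factorization p : ℝ) * log p := by
          gcongr with p hp
          exact div_le_factorization_factorial (Nat.mem_primesLE.1 hp).2 n
      _ = log (n.factorial : ℕ) := by
          refine (log_nat_eq_sum_of_primeFactors_subset fun p hp => ?_).symm
          have hp := Nat.mem_primeFactors.1 hp
          exact Nat.mem_primesLE.2 ⟨(hp.1.dvd_factorial).1 hp.2.1, hp.1⟩
      _ ≤ log ((n ^ n : ℕ) : ℝ) :=
          log_le_log (by exact_mod_cast Nat.factorial_pos n)
            (by exact_mod_cast Nat.factorial_le_pow n)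
      _ = n * log n := by push_cast; rw [log_pow]
  have hchebyshev : ∑ p ∈ Nat.primesLE n, log p ≤ log 4 * n :=
    Chebyshev.theta_eq_sum_primesLE_log n ▸ Chebyshev.theta_le_log4_mul_x n.cast_nonneg
  have hfloor (p : ℕ) (hp : p ∈ Nat.primesLE n) :
      (n : ℝ) * (log p / p) ≤ ((n / p : ℕ) : ℝ) * log p + log p := by
    have hlt : (n : ℝ) / p < ((n / p : ℕ) : ℝ) + 1 := by
      rw [← Nat.floor_div_eq_div (K := ℝ)]; exact Nat.lt_floor_add_one _
    calc (n : ℝ) * (log p / p) = (n : ℝ) / p * log p := by ring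
      _ ≤ (((n / p : ℕ) : ℝ) + 1) * log p := by gcongr
      _ = _ := by ring
  rw [← mul_le_mul_iff_right₀ (by exact_mod_cast hn : (0 : ℝ) < n), mul_sum]
  calc ∑ p ∈ Nat.primesLE n, (n : ℝ) * (log p / p)
      ≤ ∑ p ∈ Nat.primesLE n, (((n / p : ℕ) : ℝ) * log p + log p) := sum_le_sum hfloor
    _ ≤ n * (log n + log 4) := by rw [sum_add_distrib]; linarith

lemma Nat.factorization_eq_card_Icc_pow_dvd {p n N : ℕ} (hp : p.Prime) (hn : n ≠ 0)
    (hnN : n ≤ N) : n.factorization p = #{i ∈ Icc 1 N | p ^ i ∣ n} := by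
  rw [factorization_eq_card_pow_dvd n hp,
    Ico_filter_pow_dvd_eq hp hn (hnN.trans (Nat.lt_pow_self hp.one_lt).le)]

lemma le_maxPrimeFac_of_mem_primeFactors {n p : ℕ} (hp : p ∈ n.primeFactors) :
    p ≤ maxPrimeFac n :=
  le_sup (f := id) hp

lemma maxPrimeFac_le_of_dvd {m n : ℕ} (h : m ∣ n) (hn : n ≠ 0) :
    maxPrimeFac m ≤ maxPrimeFac n :=
  sup_mono (Nat.primeFactors_mono h hn)

noncomputable def smoothUpTo (y : ℝ) (N : ℕ) : Finset ℕ :=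
  {n ∈ Icc 1 N | (maxPrimeFac n : ℝ) ≤ y}

section smoothUpTo

variable {y : ℝ} {N : ℕ}

lemma mem_smoothUpTo {n : ℕ} :
    n ∈ smoothUpTo y N ↔ (1 ≤ n ∧ n ≤ N) ∧ (maxPrimeFac n : ℝ) ≤ y := by
  rw [smoothUpTo, mem_filter, mem_Icc]

lemma smoothUpTo_subset_Icc : smoothUpTo y N ⊆ Icc 1 N := filter_subset _ _

lemma filter_le_smoothUpTo {m : ℕ} (hm : m ≤ N) :
    {n ∈ smoothUpTo y N | n ≤ m} = smoothUpTo y m := by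
  ext n
  simp only [mem_filter, mem_smoothUpTo]
  constructor
  · rintro ⟨⟨⟨h1, -⟩, hy⟩, hnm⟩
    exact ⟨⟨h1, hnm⟩, hy⟩
  · rintro ⟨⟨h1, hnm⟩, hy⟩
    exact ⟨⟨⟨h1, hnm.trans hm⟩, hy⟩, hnm⟩

lemma card_filter_dvd_smoothUpTo_le {d : ℕ} (hd : 0 < d) :
    #{n ∈ smoothUpTo y N | d ∣ n} ≤ #(smoothUpTo y (N / d)) := by
  refine card_le_card_of_injOn (· / d) (fun n hn => ?_) (fun a ha b hb hab => ?_)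
  · rw [mem_coe, mem_filter, mem_smoothUpTo] at hn
    obtain ⟨⟨⟨hn1, hnN⟩, hny⟩, hdn⟩ := hn
    rw [mem_coe, mem_smoothUpTo]
    refine ⟨⟨?_, Nat.div_le_div_right hnN⟩, hny.trans' ?_⟩
    · exact (Nat.one_le_div_iff hd).2 (Nat.le_of_dvd hn1 hdn)
    · exact_mod_cast maxPrimeFac_le_of_dvd (Nat.div_dvd_of_dvd hdn) (by omega)
  · rw [mem_coe, mem_filter] at ha hb
    rw [← Nat.div_mul_cancel ha.2, ← Nat.div_mul_cancel hb.2]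
    exact congrArg (· * d) hab

lemma primeFactors_subset_primesLE_of_mem_smoothUpTo {n : ℕ} (hn : n ∈ smoothUpTo y N) :
    n.primeFactors ⊆ Nat.primesLE ⌊y⌋₊ := fun _ hp =>
  Nat.mem_primesLE.2 ⟨Nat.le_floor ((Nat.cast_le.2 (le_maxPrimeFac_of_mem_primeFactors hp)).trans
    (mem_smoothUpTo.1 hn).2), Nat.prime_of_mem_primeFactors hp⟩

lemma sum_factorization_smoothUpTo_eq {p : ℕ} (hp : p.Prime) :
    ∑ n ∈ smoothUpTo y N, n.factorization p =
      ∑ i ∈ Icc 1 N, #{n ∈ smoothUpTo y N | p ^ i ∣ n} := by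
  calc ∑ n ∈ smoothUpTo y N, n.factorization p
      = ∑ n ∈ smoothUpTo y N, #{i ∈ Icc 1 N | p ^ i ∣ n} := sum_congr rfl fun n hn => by
        have hn := mem_smoothUpTo.1 hn
        exact Nat.factorization_eq_card_Icc_pow_dvd hp (by omega) hn.1.2
    _ = _ := by simp only [card_filter]; exact sum_comm

variable {δ K : ℝ}

lemma sum_log_sub_log_smoothUpTo_le (hδ0 : 0 ≤ δ) (hδ1 : δ < 1) (hK : 0 ≤ K)
    (ih : ∀ m < N, (#(smoothUpTo y m) : ℝ) ≤ K * m ^ (1 - δ)) :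
    ∑ n ∈ smoothUpTo y N, (log N - log n) ≤ K * N ^ (1 - δ) / (1 - δ) := by
  calc ∑ n ∈ smoothUpTo y N, (log N - log n)
      ≤ #(smoothUpTo y N) * (log N - log N) + ∑ m ∈ Ico 1 N,
          K * (m : ℝ) ^ (1 - δ) * ((log N - log m) - (log N - log ((m + 1 : ℕ) : ℝ))) := by
        refine sum_le_card_mul_add_sum_mul_sub smoothUpTo_subset_Icc (fun m hm => ?_)
          (fun m hm => ?_)
        · have hm : (0 : ℝ) < m := by exact_mod_cast (mem_Ico.1 hm).1
          gcongr
          simp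
        · rw [filter_le_smoothUpTo (mem_Ico.1 hm).2.le]
          exact ih m (mem_Ico.1 hm).2
    _ ≤ ∑ m ∈ Icc 1 N, K * (m : ℝ) ^ (-δ) := by
        rw [sub_self, mul_zero, zero_add]
        refine (sum_le_sum fun m hm => ?_).trans
          (sum_le_sum_of_subset_of_nonneg Ico_subset_Icc_self fun _ _ _ => by positivity)
        have hm : (0 : ℝ) < m := by exact_mod_cast (mem_Ico.1 hm).1
        calc K * (m : ℝ) ^ (1 - δ) * ((log N - log m) - (log N - log ((m + 1 : ℕ) : ℝ)))
            = K * (m : ℝ) ^ (1 - δ) * (log (m + 1) - log m) := by push_cast; ring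
          _ ≤ K * (m : ℝ) ^ (1 - δ) * (m : ℝ)⁻¹ := by
              gcongr
              exact log_add_one_sub_log_le hm
          _ = K * (m : ℝ) ^ (-δ) := by
              rw [mul_assoc, ← rpow_neg_one, ← rpow_add hm]; ring_nf
    _ ≤ K * N ^ (1 - δ) / (1 - δ) := by
        rw [← mul_sum, mul_div_assoc]
        gcongr
        exact sum_Icc_rpow_neg_le hδ0 hδ1 N

lemma sum_factorization_smoothUpTo_le {p : ℕ} (hp : p.Prime) (hpδ : δ * log p ≤ 1 / 2)
    (hδ1 : δ ≤ 1) (hK : 0 ≤ K) (hN : 0 < N)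
    (ih : ∀ m < N, (#(smoothUpTo y m) : ℝ) ≤ K * m ^ (1 - δ)) :
    ∑ n ∈ smoothUpTo y N, (n.factorization p : ℝ) ≤ 14 * K * N ^ (1 - δ) / p := by
  have hp0 : (0 : ℝ) < p := by exact_mod_cast hp.pos
  have hterm (i : ℕ) (hi : i ∈ Icc 1 N) : (#{n ∈ smoothUpTo y N | p ^ i ∣ n} : ℝ)
      ≤ K * N ^ (1 - δ) * ((p : ℝ) ^ (δ - 1)) ^ i := by
    have hpi : 1 < p ^ i := Nat.one_lt_pow (by grind) hp.one_lt
    calc (#{n ∈ smoothUpTo y N | p ^ i ∣ n} : ℝ) ≤ #(smoothUpTo y (N / p ^ i)) := by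
          exact_mod_cast card_filter_dvd_smoothUpTo_le (by omega)
      _ ≤ K * ((N / p ^ i : ℕ) : ℝ) ^ (1 - δ) := ih _ (Nat.div_lt_self hN hpi)
      _ ≤ K * ((N : ℝ) / (p : ℝ) ^ i) ^ (1 - δ) := by
          gcongr
          exact_mod_cast Nat.cast_div_le
      _ = K * N ^ (1 - δ) * ((p : ℝ) ^ (δ - 1)) ^ i := by
          rw [div_rpow (by positivity) (by positivity), ← rpow_natCast, ← rpow_mul hp0.le,
            ← rpow_mul_natCast hp0.le, div_eq_mul_inv, ← rpow_neg hp0.le, mul_assoc]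
          congr 3
          ring
  calc ∑ n ∈ smoothUpTo y N, (n.factorization p : ℝ)
      = ∑ i ∈ Icc 1 N, (#{n ∈ smoothUpTo y N | p ^ i ∣ n} : ℝ) := by
        exact_mod_cast sum_factorization_smoothUpTo_eq hp
    _ ≤ ∑ i ∈ Icc 1 N, K * N ^ (1 - δ) * ((p : ℝ) ^ (δ - 1)) ^ i := sum_le_sum hterm
    _ ≤ K * N ^ (1 - δ) * (14 / p) := by
        rw [← mul_sum]
        gcongr
        exact sum_geom_rpow_le hp.two_le hpδ N
    _ = 14 * K * N ^ (1 - δ) / p := by ring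

lemma sum_log_smoothUpTo_le (hy : 1 ≤ y) (hδ0 : 0 ≤ δ) (hδ : δ * log y ≤ 1 / 2) (hδ1 : δ ≤ 1)
    (hK : 0 ≤ K) (hN : 0 < N) (ih : ∀ m < N, (#(smoothUpTo y m) : ℝ) ≤ K * m ^ (1 - δ)) :
    ∑ n ∈ smoothUpTo y N, log n ≤ 14 * K * N ^ (1 - δ) * (log y + log 4) := by
  have hfloor : (0 : ℝ) < ⌊y⌋₊ := by exact_mod_cast Nat.floor_pos.2 hy
  have hprime (p : ℕ) (hp : p ∈ Nat.primesLE ⌊y⌋₊) : p.Prime ∧ δ * log p ≤ 1 / 2 := by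
    obtain ⟨hpy, hp⟩ := Nat.mem_primesLE.1 hp
    refine ⟨hp, hδ.trans' (mul_le_mul_of_nonneg_left ?_ hδ0)⟩
    exact log_le_log (by exact_mod_cast hp.pos)
      ((Nat.cast_le.2 hpy).trans (Nat.floor_le (by linarith)))
  calc ∑ n ∈ smoothUpTo y N, log n
      = ∑ n ∈ smoothUpTo y N, ∑ p ∈ Nat.primesLE ⌊y⌋₊, n.factorization p * log p :=
        sum_congr rfl fun n hn =>
          log_nat_eq_sum_of_primeFactors_subset (primeFactors_subset_primesLE_of_mem_smoothUpTo hn)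
    _ = ∑ p ∈ Nat.primesLE ⌊y⌋₊, (∑ n ∈ smoothUpTo y N, (n.factorization p : ℝ)) * log p := by
        rw [sum_comm]
        simp only [sum_mul]
    _ ≤ ∑ p ∈ Nat.primesLE ⌊y⌋₊, 14 * K * N ^ (1 - δ) / p * log p := by
        gcongr with p hp
        exact sum_factorization_smoothUpTo_le (hprime p hp).1 (hprime p hp).2 hδ1 hK hN ih
    _ = 14 * K * N ^ (1 - δ) * ∑ p ∈ Nat.primesLE ⌊y⌋₊, log p / p := by
        rw [mul_sum]
        exact sum_congr rfl fun _ _ => by ring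
    _ ≤ 14 * K * N ^ (1 - δ) * (log y + log 4) := by
        gcongr
        exact (sum_primesLE_log_div_le _).trans (by gcongr; exact Nat.floor_le (by linarith))

lemma card_smoothUpTo_mul_log_le (hy : 1 ≤ y) (hδ0 : 0 ≤ δ) (hδ : δ * log y ≤ 1 / 2)
    (hδ1 : δ < 1) (hK : 0 ≤ K) (hN : 0 < N)
    (ih : ∀ m < N, (#(smoothUpTo y m) : ℝ) ≤ K * m ^ (1 - δ)) :
    #(smoothUpTo y N) * log N ≤ K * N ^ (1 - δ) * (1 / (1 - δ) + 14 * (log y + log 4)) :=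
  calc #(smoothUpTo y N) * log N
      = ∑ n ∈ smoothUpTo y N, (log N - log n) + ∑ n ∈ smoothUpTo y N, log n := by
        rw [← sum_add_distrib]
        simp
    _ ≤ K * N ^ (1 - δ) / (1 - δ) + 14 * K * N ^ (1 - δ) * (log y + log 4) :=
        add_le_add (sum_log_sub_log_smoothUpTo_le hδ0 hδ1 hK ih)
          (sum_log_smoothUpTo_le hy hδ0 hδ hδ1.le hK hN ih)
    _ = K * N ^ (1 - δ) * (1 / (1 - δ) + 14 * (log y + log 4)) := by ring

theorem card_smoothUpTo_le (hy : exp 11 ≤ y) (hδ0 : 0 ≤ δ) (hδ : δ * log y ≤ 1 / 2) (N : ℕ) :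
    (#(smoothUpTo y N) : ℝ) ≤ exp 8 * N ^ (1 - δ) := by
  have hL : 11 ≤ log y := by simpa using log_le_log (exp_pos 11) hy
  have hy1 : 1 ≤ y := (one_le_exp (by norm_num)).trans hy
  have hδ1 : δ ≤ 1 / 22 := by nlinarith
  induction N using Nat.strong_induction_on with
  | _ N ih =>
  rcases N.eq_zero_or_pos with rfl | hN
  · simp only [smoothUpTo, Icc_eq_empty_of_lt one_pos, filter_empty, card_empty, Nat.cast_zero]
    positivity
  have hN1 : (1 : ℝ) ≤ N := by exact_mod_cast hN
  by_cases hsmall : log N ≤ 16 * log y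
  · calc (#(smoothUpTo y N) : ℝ) ≤ N := by
          exact_mod_cast (card_le_card smoothUpTo_subset_Icc).trans (Nat.card_Icc 1 N).le
      _ = N ^ (1 - δ) * N ^ δ := by rw [← rpow_add (by positivity)]; simp
      _ ≤ N ^ (1 - δ) * exp 8 := by
          gcongr
          rw [rpow_def_of_pos (by positivity)]
          exact exp_le_exp.2 (by nlinarith [log_nonneg hN1])
      _ = exp 8 * N ^ (1 - δ) := mul_comm _ _
  · push Not at hsmall
    have hlogN : 0 < log N := by linarith
    refine le_of_mul_le_mul_right ((card_smoothUpTo_mul_log_le hy1 hδ0 hδ (by linarith)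
      (exp_pos 8).le hN ih).trans ?_) hlogN
    gcongr
    have hlog4 : log 4 < 1.39 := by
      rw [show (4 : ℝ) = 2 ^ 2 by norm_num, log_pow]
      linarith [log_two_lt_d9]
    have hσ : 1 / (1 - δ) ≤ 2 := by rw [div_le_iff₀ (by linarith)]; linarith
    linarith

end smoothUpTo

theorem sum_smoothUpTo_rpow_neg_le {β y δ : ℝ} (hβ0 : 0 ≤ β) (hy : exp 11 ≤ y) (hδ0 : 0 < δ)
    (hδ : δ * log y ≤ 1 / 2) (hδβ : δ ≤ (1 - β) / 2) (N : ℕ) :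
    ∑ n ∈ smoothUpTo y N, (n : ℝ) ^ (-β) ≤ exp 8 * (1 + 2 / (1 - β)) * N ^ (1 - δ - β) := by
  have hcount (m : ℕ) (hm : m ∈ Icc 1 N) :
      (#{n ∈ smoothUpTo y N | n ≤ m} : ℝ) ≤ exp 8 * m ^ (1 - δ) := by
    rw [filter_le_smoothUpTo (mem_Icc.1 hm).2]
    exact card_smoothUpTo_le hy hδ0.le hδ m
  calc ∑ n ∈ smoothUpTo y N, (n : ℝ) ^ (-β)
      ≤ exp 8 * (1 + 1 / (1 - δ - β)) * N ^ (1 - δ - β) :=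
        sum_rpow_neg_le_of_card_filter_le smoothUpTo_subset_Icc hβ0 (by linarith) (by linarith)
          hcount
    _ ≤ exp 8 * (1 + 2 / (1 - β)) * N ^ (1 - δ - β) := by
        have hfrac : 1 / (1 - δ - β) ≤ 2 / (1 - β) := by
          rw [div_le_div_iff₀ (by linarith) (by linarith)]; linarith
        gcongr exp 8 * (1 + ?_) * _

/-- For `0 ≤ β < 1` there are constants `C_β, y_β, c_β > 0` such that for all reals
`x, y` with `y ≥ y_β` and `y ≤ c_β x`,
`Σ_{n ≤ x, P⁺(n) ≤ y} n^{-β} ≤ C_β x^{1-β} e^{-(1/2) log x / log y}`. -/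
theorem smooth_sum_bound (β : ℝ) (hβ0 : 0 ≤ β) (hβ1 : β < 1) :
    ∃ C y₀ c : ℝ, 0 < C ∧ 0 < y₀ ∧ 0 < c ∧ ∀ x y : ℝ, y₀ ≤ y → y ≤ c * x →
      ∑ n ∈ (Icc 1 ⌊x⌋₊).filter (fun n => (maxPrimeFac n : ℝ) ≤ y), (n : ℝ) ^ (-β) ≤
        C * x ^ (1 - β) * Real.exp (-(1 / 2) * (Real.log x / Real.log y)) := by
  have hβ : 0 < 1 / (1 - β) := one_div_pos.2 (by linarith)
  refine ⟨exp 8 * (1 + 2 / (1 - β)), exp (11 + 1 / (1 - β)), 1, by positivity, exp_pos _,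
    one_pos, fun x y hy hyx => ?_⟩
  have hL : 11 + 1 / (1 - β) ≤ log y := by simpa using log_le_log (exp_pos _) hy
  have hx : 0 < x := by linarith [exp_pos (11 + 1 / (1 - β))]
  set δ := 1 / (2 * log y) with hδ
  have hL0 : 0 < log y := by linarith
  have hδ0 : 0 < δ := by positivity
  have hδL : δ * log y = 1 / 2 := by rw [hδ]; field_simp
  have hδβ : δ ≤ (1 - β) / 2 := by
    rw [hδ, div_le_div_iff₀ (by linarith) two_pos]
    nlinarith [(div_le_iff₀' (by linarith : 0 < 1 - β)).1 (by linarith : 1 / (1 - β) ≤ log y)]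
  change ∑ n ∈ smoothUpTo y ⌊x⌋₊, (n : ℝ) ^ (-β) ≤ _
  calc ∑ n ∈ smoothUpTo y ⌊x⌋₊, (n : ℝ) ^ (-β)
      ≤ exp 8 * (1 + 2 / (1 - β)) * (⌊x⌋₊ : ℝ) ^ (1 - δ - β) :=
        sum_smoothUpTo_rpow_neg_le hβ0 ((exp_le_exp.2 (by linarith)).trans hy) hδ0 hδL.le hδβ _
    _ ≤ exp 8 * (1 + 2 / (1 - β)) * x ^ (1 - δ - β) := by
        gcongr
        · linarith
        · exact Nat.floor_le hx.le
    _ = exp 8 * (1 + 2 / (1 - β)) * x ^ (1 - β) * exp (-(1 / 2) * (log x / log y)) := by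
        rw [show 1 - δ - β = (1 - β) + -δ by ring, rpow_add hx, rpow_def_of_pos hx (-δ), hδ]
        ring_nf
end

section
/- Lower bound of Lemma 4.2 (util): Let β > 0. There is a constant c_β > 0 (independent of x, y) such that whenever y = o(log x) — more precisely whenever every integer of the form p₁^{α₁}···p_j^{α_j} with all αℓ ≤ ⌊(log x)/(Cy)⌋ is at most x, where p₁ < ⋯ < p_j are the primes ≤ y — one has Σ_{n ≤ x, P⁺(n) ≤ y} n^{-β} ≥ c_β ∏_{ℓ=1}^{j} (1 − p_ℓ^{-β})^{-1}. -/
/-!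
The divisors of `M = (∏_{p ≤ y} p)^H` are `y`-smooth and at most `M ≤ x`, so the smooth sum
dominates `∑_{d ∣ M} d^{-β} = ∏_p ∑_{i ≤ H} p^{-iβ} = ∏_p (1 - p^{-(H+1)β}) (1 - p^{-β})⁻¹`.
Since `(H+1)β ≥ 2`, each factor `1 - p^{-(H+1)β}` is at least `1 - p^{-2}`, and
`∏_{n=2}^{N} (1 - n^{-2}) = (N+1)/(2N) ≥ 1/2`, so `c_β = 1/2` works.
-/

open Finset

namespace ArithmeticFunction

noncomputable def rpow (s : ℝ) : ArithmeticFunction ℝ :=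
  ⟨fun n => if n = 0 then 0 else (n : ℝ) ^ s, if_pos rfl⟩

theorem rpow_apply {s : ℝ} {n : ℕ} (hn : n ≠ 0) : rpow s n = (n : ℝ) ^ s :=
  if_neg hn

theorem isMultiplicative_rpow (s : ℝ) : (rpow s).IsMultiplicative := by
  refine IsMultiplicative.iff_ne_zero.mpr ⟨by simp [rpow_apply], fun hm hn _ => ?_⟩
  rw [rpow_apply (mul_ne_zero hm hn), rpow_apply hm, rpow_apply hn, Nat.cast_mul,
    Real.mul_rpow (Nat.cast_nonneg _) (Nat.cast_nonneg _)]

theorem IsMultiplicative.sum_divisors_prod_pow {R : Type*} [CommSemiring R]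
    {f : ArithmeticFunction R} (hf : f.IsMultiplicative) {S : Finset ℕ}
    (hS : ∀ p ∈ S, p.Prime) (k : ℕ) :
    ∑ d ∈ ((∏ p ∈ S, p) ^ k).divisors, f d = ∏ p ∈ S, ∑ i ∈ range (k + 1), f (p ^ i) := by
  have hcoprime : (S : Set ℕ).Pairwise (Function.onFun Nat.Coprime (· ^ k)) :=
    fun p hp q hq hpq => Nat.coprime_pow_primes k k (hS p hp) (hS q hq) hpq
  rw [← coe_mul_zeta_apply, ← prod_pow,
    (hf.mul isMultiplicative_zeta.natCast).map_prod _ S hcoprime]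
  exact prod_congr rfl fun p hp => by rw [coe_mul_zeta_apply, Nat.sum_divisors_prime_pow (hS p hp)]

end ArithmeticFunction

theorem sum_divisors_prod_pow_rpow {S : Finset ℕ} (hS : ∀ p ∈ S, p.Prime) (k : ℕ) (s : ℝ) :
    ∑ d ∈ ((∏ p ∈ S, p) ^ k).divisors, (d : ℝ) ^ s =
      ∏ p ∈ S, ∑ i ∈ range (k + 1), ((p : ℝ) ^ s) ^ i := by
  have h := (ArithmeticFunction.isMultiplicative_rpow s).sum_divisors_prod_pow hS k
  rw [sum_congr rfl fun d hd => ArithmeticFunction.rpow_apply (Nat.pos_of_mem_divisors hd).ne'] at h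
  rw [h]
  refine prod_congr rfl fun p hp => sum_congr rfl fun i _ => ?_
  rw [ArithmeticFunction.rpow_apply (pow_ne_zero i (hS p hp).ne_zero), Nat.cast_pow,
    ← Real.rpow_natCast, ← Real.rpow_mul (Nat.cast_nonneg p), mul_comm,
    Real.rpow_mul (Nat.cast_nonneg p), Real.rpow_natCast]

theorem maxPrimeFac_le_of_dvd_prod_pow {S : Finset ℕ} (hS : ∀ p ∈ S, p.Prime) {N : ℕ}
    (hSN : ∀ p ∈ S, p ≤ N) {d k : ℕ} (hd : d ∣ (∏ p ∈ S, p) ^ k) : maxPrimeFac d ≤ N := by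
  refine Finset.sup_le fun q hq => hSN q ?_
  obtain ⟨hq, hqd, -⟩ := Nat.mem_primeFactors.mp hq
  rw [← Nat.primeFactors_prod hS]
  exact Nat.mem_primeFactors.mpr ⟨hq, hq.dvd_of_dvd_pow (hqd.trans hd),
    prod_ne_zero_iff.mpr fun p hp => (hS p hp).ne_zero⟩

theorem prod_Icc_one_sub_inv_sq {N : ℕ} (hN : 1 ≤ N) :
    ∏ n ∈ Icc 2 N, (1 - ((n : ℝ) ^ 2)⁻¹) = ((N : ℝ) + 1) / (2 * N) := by
  induction N, hN using Nat.le_induction with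
  | base => norm_num
  | succ N hN ih =>
    rw [prod_Icc_succ_top (by omega), ih]
    have : (N : ℝ) ≠ 0 := Nat.cast_ne_zero.mpr (by omega)
    push_cast
    field_simp
    ring

theorem one_sub_inv_sq_mem_Icc {n : ℕ} (hn : 2 ≤ n) : 1 - ((n : ℝ) ^ 2)⁻¹ ∈ Set.Icc 0 1 := by
  have : (1 : ℝ) ≤ (n : ℝ) ^ 2 := one_le_pow₀ (by exact_mod_cast (by omega : 1 ≤ n))
  constructor <;> linarith [inv_le_one_of_one_le₀ this, inv_nonneg.mpr (zero_le_one.trans this)]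

theorem one_half_le_prod_one_sub_inv_sq {S : Finset ℕ} (hS : ∀ n ∈ S, 2 ≤ n) :
    1 / 2 ≤ ∏ n ∈ S, (1 - ((n : ℝ) ^ 2)⁻¹) := by
  set N := S.sup id + 1
  have hSN : S ⊆ Icc 2 N := fun n hn =>
    mem_Icc.mpr ⟨hS n hn, (le_sup (f := id) hn).trans (Nat.le_succ _)⟩
  calc 1 / 2 ≤ ((N : ℝ) + 1) / (2 * N) := by
        rw [div_le_div_iff₀ two_pos (by positivity)]
        linarith
    _ = ∏ n ∈ Icc 2 N, (1 - ((n : ℝ) ^ 2)⁻¹) := (prod_Icc_one_sub_inv_sq (Nat.le_add_left 1 _)).symm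
    _ ≤ _ := prod_le_prod_of_subset_of_le_one hSN
        (fun n hn => (one_sub_inv_sq_mem_Icc (mem_Icc.mp hn).1).1)
        (fun n hn _ => (one_sub_inv_sq_mem_Icc (mem_Icc.mp hn).1).2)

theorem one_sub_mul_inv_one_sub_le_geom_sum {r s : ℝ} (hr : r < 1) {n : ℕ} (h : r ^ n ≤ s) :
    (1 - s) * (1 - r)⁻¹ ≤ ∑ i ∈ range n, r ^ i := by
  rw [geom_sum_eq hr.ne, ← neg_div_neg_eq, neg_sub, neg_sub, div_eq_mul_inv]
  exact mul_le_mul_of_nonneg_right (by linarith) (inv_nonneg.mpr (by linarith))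

theorem rpow_neg_pow_le_inv_sq {p β : ℝ} (hp : 1 ≤ p) {n : ℕ} (hn : 2 ≤ n * β) :
    (p ^ (-β)) ^ n ≤ (p ^ 2)⁻¹ := by
  have hp0 : 0 ≤ p := zero_le_one.trans hp
  rw [← Real.rpow_natCast, ← Real.rpow_mul hp0, ← Real.rpow_two, ← Real.rpow_neg hp0]
  exact Real.rpow_le_rpow_of_exponent_le hp (by linarith)

theorem one_half_mul_prod_le_prod_geom_sum {S : Finset ℕ} (hS : ∀ p ∈ S, 2 ≤ p) {β : ℝ}
    (hβ : 0 < β) {n : ℕ} (hn : 2 ≤ n * β) :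
    1 / 2 * ∏ p ∈ S, (1 - (p : ℝ) ^ (-β))⁻¹ ≤ ∏ p ∈ S, ∑ i ∈ range n, ((p : ℝ) ^ (-β)) ^ i := by
  have hp1 : ∀ p ∈ S, (1 : ℝ) < p := fun p hp => by exact_mod_cast hS p hp
  have hr : ∀ p ∈ S, (p : ℝ) ^ (-β) < 1 := fun p hp =>
    Real.rpow_lt_one_of_one_lt_of_neg (hp1 p hp) (neg_neg_of_pos hβ)
  calc 1 / 2 * ∏ p ∈ S, (1 - (p : ℝ) ^ (-β))⁻¹
      ≤ (∏ p ∈ S, (1 - ((p : ℝ) ^ 2)⁻¹)) * ∏ p ∈ S, (1 - (p : ℝ) ^ (-β))⁻¹ :=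
        mul_le_mul_of_nonneg_right (one_half_le_prod_one_sub_inv_sq hS)
          (prod_nonneg fun p hp => inv_nonneg.mpr (sub_nonneg.mpr (hr p hp).le))
    _ = ∏ p ∈ S, (1 - ((p : ℝ) ^ 2)⁻¹) * (1 - (p : ℝ) ^ (-β))⁻¹ := prod_mul_distrib.symm
    _ ≤ _ := prod_le_prod
        (fun p hp => mul_nonneg (one_sub_inv_sq_mem_Icc (hS p hp)).1
          (inv_nonneg.mpr (sub_nonneg.mpr (hr p hp).le)))
        (fun p hp => one_sub_mul_inv_one_sub_le_geom_sum (hr p hp)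
          (rpow_neg_pow_le_inv_sq (hp1 p hp).le hn))

/-- Lower bound of Lemma 4.2: for `β > 0` there is `c_β > 0` such that whenever every
integer of the form `∏_{p ≤ y prime} p^{α_p}` with all exponents `α_p ≤ H` is at most
`x`, and `(H+1)β ≥ 2`, one has
`Σ_{n ≤ x, P⁺(n) ≤ y} n^{-β} ≥ c_β ∏_{p ≤ y prime} (1 − p^{-β})⁻¹`. -/
theorem smooth_sum_lower_bound (β : ℝ) (hβ : 0 < β) :
    ∃ c : ℝ, 0 < c ∧ ∀ x y : ℝ, 2 ≤ y → y ≤ x → ∀ H : ℕ,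
      2 ≤ ((H : ℝ) + 1) * β →
      (∀ f : ℕ → ℕ, (∀ p ∈ (Icc 2 ⌊y⌋₊).filter Nat.Prime, f p ≤ H) →
        ((∏ p ∈ (Icc 2 ⌊y⌋₊).filter Nat.Prime, p ^ f p : ℕ) : ℝ) ≤ x) →
      c * ∏ p ∈ (Icc 2 ⌊y⌋₊).filter Nat.Prime, (1 - (p : ℝ) ^ (-β))⁻¹ ≤
        ∑ n ∈ (Icc 1 ⌊x⌋₊).filter (fun n => (maxPrimeFac n : ℝ) ≤ y), (n : ℝ) ^ (-β) := by
  refine ⟨1 / 2, one_half_pos, fun x y hy _ H hH hbig => ?_⟩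
  set S := (Icc 2 ⌊y⌋₊).filter Nat.Prime
  have hS : ∀ p ∈ S, p.Prime := fun p hp => (mem_filter.mp hp).2
  have hSy : ∀ p ∈ S, p ≤ ⌊y⌋₊ := fun p hp => (mem_Icc.mp (mem_filter.mp hp).1).2
  set M := (∏ p ∈ S, p) ^ H
  have hMx : M ≤ ⌊x⌋₊ :=
    Nat.le_floor (by simpa [M, prod_pow] using hbig (fun _ => H) fun _ _ => le_rfl)
  have hsmooth : M.divisors ⊆ (Icc 1 ⌊x⌋₊).filter (fun n => (maxPrimeFac n : ℝ) ≤ y) := by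
    intro d hd
    obtain ⟨hdM, hM⟩ := Nat.mem_divisors.mp hd
    refine mem_filter.mpr ⟨mem_Icc.mpr ⟨Nat.pos_of_dvd_of_pos hdM (Nat.pos_of_ne_zero hM),
      (Nat.le_of_dvd (Nat.pos_of_ne_zero hM) hdM).trans hMx⟩, ?_⟩
    exact (Nat.cast_le.mpr (maxPrimeFac_le_of_dvd_prod_pow hS hSy hdM)).trans
      (Nat.floor_le (by linarith))
  calc 1 / 2 * ∏ p ∈ S, (1 - (p : ℝ) ^ (-β))⁻¹
      ≤ ∏ p ∈ S, ∑ i ∈ range (H + 1), ((p : ℝ) ^ (-β)) ^ i :=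
        one_half_mul_prod_le_prod_geom_sum (fun p hp => (hS p hp).two_le) hβ (by exact_mod_cast hH)
    _ = ∑ d ∈ M.divisors, (d : ℝ) ^ (-β) := (sum_divisors_prod_pow_rpow hS H (-β)).symm
    _ ≤ _ := sum_le_sum_of_subset_of_nonneg hsmooth fun _ _ _ =>
        Real.rpow_nonneg (Nat.cast_nonneg _) _
end

section
/- Let X = {X_z : z ∈ Z} and Y = {Y_z : z ∈ Z} be two finite families of integrable real random variables on a common probability space, with the family X independent of the family Y, and each Y_z centered (E Y_z = 0). Then E sup_{z∈Z} |X_z + Y_z| ≥ E sup_{z∈Z} |X_z|. -/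
/-!
Let `μ` and `ν` be the laws of the vectors `X` and `Y`; by independence `(X, Y)` has law `μ ⊗ ν`.
For fixed `x`, centering gives `x_z = E (x_z + Y_z)`, hence by Jensen
`|x_z| ≤ E |x_z + Y_z| ≤ E sup_w |x_w + Y_w|` for every `z`. Taking the supremum over `z` and
integrating in `x` against `μ` yields the inequality by Fubini.
-/

open MeasureTheory ProbabilityTheory

section

variable {α Z : Type*} [MeasurableSpace α] [Fintype Z]

theorem integrable_iSup_abs {μ : Measure α} {g : Z → α → ℝ} (hg : ∀ z, Integrable (g z) μ) :
    Integrable (fun a => ⨆ z, |g z a|) μ := by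
  refine (integrable_finsetSum Finset.univ fun z _ => (hg z).abs).mono'
    (AEMeasurable.iSup fun z => (hg z).aemeasurable.abs).aestronglyMeasurable ?_
  refine .of_forall fun a => ?_
  have hnonneg : ∀ z, 0 ≤ |g z a| := fun z => abs_nonneg _
  rw [Real.norm_of_nonneg (Real.iSup_nonneg hnonneg)]
  exact Real.iSup_le (fun z => Finset.single_le_sum (fun w _ => hnonneg w) (Finset.mem_univ z))
    (Finset.sum_nonneg fun w _ => hnonneg w)

theorem iSup_abs_le_integral_iSup_abs_add {ν : Measure (Z → ℝ)} [IsProbabilityMeasure ν]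
    (hν : ∀ z, Integrable (fun y => y z) ν) (hν_centered : ∀ z, ∫ y, y z ∂ν = 0)
    (x : Z → ℝ) : ⨆ z, |x z| ≤ ∫ y, ⨆ z, |x z + y z| ∂ν := by
  have hshift : ∀ z, Integrable (fun y => x z + y z) ν := fun z => (integrable_const _).add (hν z)
  refine Real.iSup_le (fun z => ?_)
    (integral_nonneg fun y => Real.iSup_nonneg fun z => abs_nonneg _)
  calc |x z| = |∫ y, x z + y z ∂ν| := by
        rw [integral_add (integrable_const _) (hν z), hν_centered z, integral_const,
          probReal_univ, one_smul, add_zero]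
    _ ≤ ∫ y, |x z + y z| ∂ν := abs_integral_le_integral_abs
    _ ≤ ∫ y, ⨆ w, |x w + y w| ∂ν :=
        integral_mono (hshift z).abs (integrable_iSup_abs hshift) fun y =>
          le_ciSup (f := fun w => |x w + y w|) (Set.finite_range _).bddAbove z

theorem integral_iSup_abs_le_integral_prod_iSup_abs_add {μ ν : Measure (Z → ℝ)}
    [IsFiniteMeasure μ] [IsProbabilityMeasure ν]
    (hμ : ∀ z, Integrable (fun x => x z) μ) (hν : ∀ z, Integrable (fun y => y z) ν)
    (hν_centered : ∀ z, ∫ y, y z ∂ν = 0) :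
    ∫ x, ⨆ z, |x z| ∂μ ≤ ∫ p, ⨆ z, |p.1 z + p.2 z| ∂(μ.prod ν) := by
  have hint : Integrable (fun p : (Z → ℝ) × (Z → ℝ) => ⨆ z, |p.1 z + p.2 z|) (μ.prod ν) :=
    integrable_iSup_abs fun z => ((hμ z).comp_fst ν).add ((hν z).comp_snd μ)
  rw [integral_prod _ hint]
  exact integral_mono (integrable_iSup_abs hμ) hint.integral_prod_left
    (iSup_abs_le_integral_iSup_abs_add hν hν_centered)

end

theorem expectation_sup_lower_bound_general
    {Ω : Type*} [MeasurableSpace Ω] (P : Measure Ω) [IsProbabilityMeasure P]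
    {Z : Type*} [Fintype Z]
    (X Y : Z → Ω → ℝ)
    (hXint : ∀ z, Integrable (X z) P) (hYint : ∀ z, Integrable (Y z) P)
    (hindep : IndepFun (fun ω z => X z ω) (fun ω z => Y z ω) P)
    (hcentered : ∀ z, ∫ ω, Y z ω ∂P = 0) :
    ∫ ω, ⨆ z, |X z ω| ∂P ≤ ∫ ω, ⨆ z, |X z ω + Y z ω| ∂P := by
  have hX : AEMeasurable (fun ω z => X z ω) P :=
    aemeasurable_pi_lambda _ fun z => (hXint z).aemeasurable
  have hY : AEMeasurable (fun ω z => Y z ω) P :=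
    aemeasurable_pi_lambda _ fun z => (hYint z).aemeasurable
  have hlaw := (indepFun_iff_map_prod_eq_prod_map_map hX hY).1 hindep
  have hcoord : ∀ (m : Measure (Z → ℝ)) z, AEStronglyMeasurable (fun x => x z) m := fun _ z =>
    (measurable_pi_apply z).aestronglyMeasurable
  have hμ : ∀ z, Integrable (fun x : Z → ℝ => x z) (P.map fun ω z => X z ω) := fun z =>
    (integrable_map_measure (hcoord _ z) hX).2 (hXint z)
  have hν : ∀ z, Integrable (fun y : Z → ℝ => y z) (P.map fun ω z => Y z ω) := fun z =>
    (integrable_map_measure (hcoord _ z) hY).2 (hYint z)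
  have hν_centered : ∀ z, ∫ y, y z ∂(P.map fun ω z => Y z ω) = 0 := fun z => by
    rw [integral_map hY (hcoord _ z)]; exact hcentered z
  have := Measure.isProbabilityMeasure_map (μ := P) hX
  have := Measure.isProbabilityMeasure_map (μ := P) hY
  have key := integral_iSup_abs_le_integral_prod_iSup_abs_add hμ hν hν_centered
  rwa [← hlaw, integral_map hX (Measurable.iSup fun z => by fun_prop).aestronglyMeasurable,
    integral_map (hX.prodMk hY) (Measurable.iSup fun z => by fun_prop).aestronglyMeasurable] at key

/-- If the finite family `X` is independent of the finite family `Y` and every `Y_z` is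
centered, then `E sup_z |X_z + Y_z| ≥ E sup_z |X_z|`. -/
theorem expectation_sup_lower_bound
    {Ω : Type*} [MeasurableSpace Ω] (P : Measure Ω) [IsProbabilityMeasure P]
    {Z : Type*} [Fintype Z] [Nonempty Z]
    (X Y : Z → Ω → ℝ)
    (hXint : ∀ z, Integrable (X z) P) (hYint : ∀ z, Integrable (Y z) P)
    (hindep : IndepFun (fun ω z => X z ω) (fun ω z => Y z ω) P)
    (hcentered : ∀ z, ∫ ω, Y z ω ∂P = 0) :
    ∫ ω, ⨆ z, |X z ω| ∂P ≤ ∫ ω, ⨆ z, |X z ω + Y z ω| ∂P :=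
  expectation_sup_lower_bound_general P X Y hXint hYint hindep hcentered
end
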